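/- arXiv:2011.00545 — 2 statements merged into one kernel-verified Lean document; each statement's English description precedes it below -/
import Mathlib

section
/- Let f : [0,∞) × H → H be continuous with ‖f(t,v)‖ ≤ p(t)·G(‖v‖) for all t ≥ 0 and v ∈ H, where p is nonnegative and locally integrable on [0,∞), G : [0,∞) → [0,∞) is continuous and nondecreasing, M := sup_{t≥0} ∫₀^t ω(t−s) p(s) ds < ∞, and limsup_{r→0⁺} (G(r)/r) is finite and satisfies limsup_{r→0⁺} (G(r)/r) · M < 1. Assume ω(t) → 0 as t → ∞ and t − ρ(t) → ∞ as t → ∞. Then there exist δ > 0 and η > 0 such that for every ξ ∈ C([−τ,0];H) with sup_{s∈[−τ,0]} ‖ξ(s)‖ ≤ δ and every continuous u : [0,∞) → H with u(0) = ξ(0), sup_{t≥0} ‖u(t)‖ ≤ η and ‖u(t)‖ → 0 as t → ∞, the function Φ(u)(t) := S(t)ξ(0) + ∫₀^t S(t−s) f(s, u[ξ](s−ρ(s))) ds satisfies: Φ(u) is continuous on [0,∞), Φ(u)(0) = ξ(0), sup_{t≥0} ‖Φ(u)(t)‖ ≤ η, and ‖Φ(u)(t)‖ → 0 as t → ∞.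 -/
open MeasureTheory Filter Set

/-- The extension `u[ξ]` of `u : [0,∞) → H` by the history `ξ` on `[-τ, 0]`. -/
noncomputable def extendByHistory {H : Type*} (ξ u : ℝ → H) : ℝ → H :=
  fun t => if 0 ≤ t then u t else ξ t



lemma my_continuousOn_union_closed {α β : Type*} [TopologicalSpace α] [TopologicalSpace β]
    {f : α → β} {s t : Set α} (hs : IsClosed s) (ht : IsClosed t)
    (h1 : ContinuousOn f s) (h2 : ContinuousOn f t) : ContinuousOn f (s ∪ t) := by
  intro x _
  have hcs : ContinuousWithinAt f s x := by
    by_cases h : x ∈ s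
    · exact h1 x h
    · exact continuousWithinAt_of_notMem_closure (by rwa [hs.closure_eq])
  have hct : ContinuousWithinAt f t x := by
    by_cases h : x ∈ t
    · exact h2 x h
    · exact continuousWithinAt_of_notMem_closure (by rwa [ht.closure_eq])
  exact hcs.union hct

lemma my_S_joint_continuous {H : Type*} [NormedAddCommGroup H] [NormedSpace ℝ H]
    (S : ℝ → H →L[ℝ] H)
    (hScont : ∀ v : H, ContinuousOn (fun t => S t v) (Set.Ici 0))
    (hSb : ∀ t ≥ (0:ℝ), ∀ v : H, ‖S t v‖ ≤ ‖v‖) :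
    ContinuousOn (fun z : ℝ × H => S z.1 z.2) (Set.Ici 0 ×ˢ (Set.univ : Set H)) := by
  rintro ⟨t₀, v₀⟩ ⟨ht₀, -⟩
  have hfst : Tendsto (fun z : ℝ × H => z.1) (nhdsWithin (t₀, v₀) (Set.Ici 0 ×ˢ Set.univ))
      (nhdsWithin t₀ (Set.Ici 0)) := by
    rw [nhdsWithin_prod_eq]; exact tendsto_fst
  have h1 : Tendsto (fun z : ℝ × H => S z.1 v₀)
      (nhdsWithin (t₀, v₀) (Set.Ici 0 ×ˢ Set.univ)) (nhds (S t₀ v₀)) :=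
    (hScont v₀ t₀ ht₀).tendsto.comp hfst
  have h2 : Tendsto (fun z : ℝ × H => S z.1 (z.2 - v₀))
      (nhdsWithin (t₀, v₀) (Set.Ici 0 ×ˢ Set.univ)) (nhds 0) := by
    have hb : Tendsto (fun z : ℝ × H => ‖z.2 - v₀‖)
        (nhdsWithin (t₀, v₀) (Set.Ici 0 ×ˢ Set.univ)) (nhds 0) := by
      have : Tendsto (fun z : ℝ × H => ‖z.2 - v₀‖) (nhds (t₀, v₀)) (nhds ‖v₀ - v₀‖) :=
        ((continuous_snd.sub continuous_const).norm).tendsto _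
      simpa using this.mono_left nhdsWithin_le_nhds
    have hev : ∀ᶠ z : ℝ × H in nhdsWithin (t₀, v₀) (Set.Ici 0 ×ˢ Set.univ),
        ‖S z.1 (z.2 - v₀)‖ ≤ ‖z.2 - v₀‖ := by
      filter_upwards [self_mem_nhdsWithin] with z hz
      exact hSb z.1 hz.1 _
    exact squeeze_zero_norm' hev hb
  have := h1.add h2
  simp only [ContinuousWithinAt]
  convert this using 2 with z
  · simp [← ContinuousLinearMap.map_add]
  · simp


lemma my_aux_main {H : Type*} [NormedAddCommGroup H] [NormedSpace ℝ H] [CompleteSpace H]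
    (S : ℝ → H →L[ℝ] H) (ω p q : ℝ → ℝ) (C M : ℝ) (g : ℝ → H)
    (hSjoint : ContinuousOn (fun z : ℝ × H => S z.1 z.2) (Set.Ici 0 ×ˢ (Set.univ : Set H)))
    (hSω : ∀ t ≥ (0:ℝ), ∀ v : H, ‖S t v‖ ≤ ω t * ‖v‖)
    (hωc : ContinuousOn ω (Set.Ici 0))
    (hω0 : ∀ t ≥ (0:ℝ), 0 ≤ ω t) (hωle : ∀ t ≥ (0:ℝ), ω t ≤ 1)
    (hωmono : ∀ s t : ℝ, 0 ≤ s → s ≤ t → ω t ≤ ω s)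
    (hωlim : Filter.Tendsto ω Filter.atTop (nhds 0))
    (hgc : ContinuousOn g (Set.Ici 0))
    (hp' : ∀ T ≥ (0:ℝ), IntervalIntegrable p MeasureTheory.volume 0 T)
    (hp0 : ∀ t ≥ (0:ℝ), 0 ≤ p t)
    (hqc : ContinuousOn q (Set.Ici 0))
    (hq0 : ∀ s ≥ (0:ℝ), 0 ≤ q s) (hqC : ∀ s ≥ (0:ℝ), q s ≤ C) (hC : 0 ≤ C)
    (hqlim : Filter.Tendsto q Filter.atTop (nhds 0))
    (hgb : ∀ s ≥ (0:ℝ), ‖g s‖ ≤ p s * q s)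
    (hMb : ∀ t ≥ (0:ℝ), (∫ s in (0:ℝ)..t, ω (t - s) * p s) ≤ M) :
    ContinuousOn (fun t => ∫ s in (0:ℝ)..t, S (t - s) (g s)) (Set.Ici 0)
    ∧ (∀ t ≥ (0:ℝ), ‖∫ s in (0:ℝ)..t, S (t - s) (g s)‖ ≤ C * M)
    ∧ Filter.Tendsto (fun t => ‖∫ s in (0:ℝ)..t, S (t - s) (g s)‖) Filter.atTop (nhds 0) := by
  have hM0 : 0 ≤ M := by
    have := hMb 0 le_rfl
    simpa using this
  -- continuity of the integrand in s, for fixed t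
  have hSgc : ∀ t ≥ (0:ℝ), ContinuousOn (fun s => S (t - s) (g s)) (Set.Icc 0 t) := by
    intro t ht
    have hmap : Set.MapsTo (fun s => ((t - s : ℝ), g s)) (Set.Icc 0 t)
        (Set.Ici 0 ×ˢ (Set.univ : Set H)) := by
      intro s hs
      exact ⟨by simp only [Set.mem_Ici]; linarith [hs.2], Set.mem_univ _⟩
    exact hSjoint.comp
      ((continuousOn_const.sub continuousOn_id).prodMk (hgc.mono (Set.Icc_subset_Ici_self)))
      hmap
  have hSgInt : ∀ t ≥ (0:ℝ), IntervalIntegrable (fun s => S (t - s) (g s))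
      MeasureTheory.volume 0 t := fun t ht =>
    ContinuousOn.intervalIntegrable_of_Icc ht (hSgc t ht)
  -- integrability of scalar products
  have hInt : ∀ t a b : ℝ, ∀ r : ℝ → ℝ, 0 ≤ a → a ≤ b → b ≤ t →
      ContinuousOn r (Set.Icc 0 t) →
      IntervalIntegrable (fun s => ω (t - s) * r s * p s) MeasureTheory.volume a b := by
    intro t a b r ha hab hbt hr
    have hsub : Set.uIcc a b ⊆ Set.Icc 0 t := by
      rw [Set.uIcc_of_le hab]; exact Set.Icc_subset_Icc ha hbt
    have h1 : ContinuousOn (fun s => ω (t - s) * r s) (Set.uIcc a b) := by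
      apply ContinuousOn.mul
      · apply hωc.comp ((continuousOn_const.sub continuousOn_id).mono hsub)
        intro s hs
        have h3 := (hsub hs).2
        simp only [Set.mem_Ici, id_eq, Pi.sub_apply]
        linarith
      · exact hr.mono hsub
    have h2 : IntervalIntegrable p MeasureTheory.volume a b := by
      apply (hp' t (by linarith)).mono_set
      rw [Set.uIcc_of_le (le_trans ha (le_trans hab hbt))]
      exact hsub
    exact h2.continuousOn_mul h1
  have hInt0 : ∀ t a b : ℝ, 0 ≤ a → a ≤ b → b ≤ t →
      IntervalIntegrable (fun s => ω (t - s) * p s) MeasureTheory.volume a b := by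
    intro t a b ha hab hbt
    have := hInt t a b (fun _ => 1) ha hab hbt continuousOn_const
    simpa using this
  -- pulling out constants
  have hconst : ∀ k t a b : ℝ, (∫ s in a..b, ω (t - s) * k * p s) =
      k * ∫ s in a..b, ω (t - s) * p s := by
    intro k t a b
    rw [← intervalIntegral.integral_const_mul]
    apply intervalIntegral.integral_congr
    intro s _
    ring
  -- pointwise norm bound
  have hptw : ∀ t ≥ (0:ℝ), ∀ s ∈ Set.Icc (0:ℝ) t, ‖S (t - s) (g s)‖ ≤ ω (t - s) * q s * p s := by
    intro t ht s hs
    have h1 : (0:ℝ) ≤ t - s := by linarith [hs.2]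
    calc ‖S (t - s) (g s)‖ ≤ ω (t - s) * ‖g s‖ := hSω _ h1 _
      _ ≤ ω (t - s) * (p s * q s) :=
          mul_le_mul_of_nonneg_left (hgb s hs.1) (hω0 _ h1)
      _ = ω (t - s) * q s * p s := by ring
  -- norm of the integral is bounded by the scalar convolution J t
  have hIbound : ∀ t ≥ (0:ℝ), ‖∫ s in (0:ℝ)..t, S (t - s) (g s)‖ ≤
      ∫ s in (0:ℝ)..t, ω (t - s) * q s * p s := by
    intro t ht
    calc ‖∫ s in (0:ℝ)..t, S (t - s) (g s)‖ ≤ ∫ s in (0:ℝ)..t, ‖S (t - s) (g s)‖ :=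
        intervalIntegral.norm_integral_le_integral_norm ht
      _ ≤ ∫ s in (0:ℝ)..t, ω (t - s) * q s * p s := by
        apply intervalIntegral.integral_mono_on ht ((hSgInt t ht).norm)
          (hInt t 0 t q le_rfl ht le_rfl (hqc.mono Set.Icc_subset_Ici_self))
        exact hptw t ht
  -- J t ≤ C * M
  have hJM : ∀ t ≥ (0:ℝ), (∫ s in (0:ℝ)..t, ω (t - s) * q s * p s) ≤ C * M := by
    intro t ht
    have h1 : (∫ s in (0:ℝ)..t, ω (t - s) * q s * p s) ≤
        ∫ s in (0:ℝ)..t, ω (t - s) * C * p s := by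
      apply intervalIntegral.integral_mono_on ht
        (hInt t 0 t q le_rfl ht le_rfl (hqc.mono Set.Icc_subset_Ici_self))
        (hInt t 0 t (fun _ => C) le_rfl ht le_rfl continuousOn_const)
      intro s hs
      have h2 : (0:ℝ) ≤ t - s := by linarith [hs.2]
      apply mul_le_mul_of_nonneg_right _ (hp0 s hs.1)
      exact mul_le_mul_of_nonneg_left (hqC s hs.1) (hω0 _ h2)
    calc (∫ s in (0:ℝ)..t, ω (t - s) * q s * p s) ≤
        ∫ s in (0:ℝ)..t, ω (t - s) * C * p s := h1
      _ = C * ∫ s in (0:ℝ)..t, ω (t - s) * p s := hconst C t 0 t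
      _ ≤ C * M := mul_le_mul_of_nonneg_left (hMb t ht) hC
  refine ⟨?_, fun t ht => le_trans (hIbound t ht) (hJM t ht), ?_⟩
  · -- continuity
    intro t₀ ht₀
    have ht₀' : (0:ℝ) ≤ t₀ := ht₀
    have hfeq : ∀ t ∈ Set.Ici (0:ℝ), (∫ s in (0:ℝ)..t, S (t - s) (g s)) =
        ∫ s, Set.indicator (Set.Ioc 0 t) (fun s' => S (t - s') (g s')) s := by
      intro t ht
      rw [intervalIntegral.integral_of_le ht,
        MeasureTheory.integral_indicator measurableSet_Ioc]
    have hle1 : ∀ᶠ t in nhdsWithin t₀ (Set.Ici 0), t ≤ t₀ + 1 :=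
      (Filter.Tendsto.eventually_le_const (by linarith) tendsto_id).filter_mono nhdsWithin_le_nhds
    have key : Filter.Tendsto
        (fun t => ∫ s, Set.indicator (Set.Ioc 0 t) (fun s' => S (t - s') (g s')) s)
        (nhdsWithin t₀ (Set.Ici 0))
        (nhds (∫ s, Set.indicator (Set.Ioc 0 t₀) (fun s' => S (t₀ - s') (g s')) s)) := by
      apply MeasureTheory.tendsto_integral_filter_of_dominated_convergence
        (Set.indicator (Set.Ioc 0 (t₀ + 1)) (fun s => p s * C))
      · -- measurability
        filter_upwards [self_mem_nhdsWithin] with t ht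
        rw [aestronglyMeasurable_indicator_iff measurableSet_Ioc]
        exact ((hSgc t ht).mono Set.Ioc_subset_Icc_self).aestronglyMeasurable measurableSet_Ioc
      · -- bound
        filter_upwards [self_mem_nhdsWithin, hle1] with t ht htle
        apply Filter.Eventually.of_forall
        intro s
        by_cases hs : s ∈ Set.Ioc 0 t
        · rw [Set.indicator_of_mem hs,
            Set.indicator_of_mem (show s ∈ Set.Ioc 0 (t₀ + 1) from ⟨hs.1, le_trans hs.2 htle⟩)]
          have h1 : (0:ℝ) ≤ t - s := by linarith [hs.2]
          calc ‖S (t - s) (g s)‖ ≤ ω (t - s) * ‖g s‖ := hSω _ h1 _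
            _ ≤ 1 * (p s * q s) :=
              mul_le_mul (hωle _ h1) (hgb s hs.1.le) (norm_nonneg _) zero_le_one
            _ = p s * q s := one_mul _
            _ ≤ p s * C := mul_le_mul_of_nonneg_left (hqC s hs.1.le) (hp0 s hs.1.le)
        · rw [Set.indicator_of_notMem hs, norm_zero]
          apply Set.indicator_nonneg
          intro s' hs'
          exact mul_nonneg (hp0 s' hs'.1.le) hC
      · -- integrability of the bound
        have h1 : IntegrableOn (fun s => p s * C) (Set.Ioc 0 (t₀ + 1))
            MeasureTheory.volume := by
          have h2 := (hp' (t₀ + 1) (by linarith)).mul_const C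
          rwa [intervalIntegrable_iff_integrableOn_Ioc_of_le (by linarith)] at h2
        exact h1.integrable_indicator measurableSet_Ioc
      · -- a.e. pointwise convergence
        have hae : ∀ᵐ s : ℝ, s ∉ ({0, t₀} : Set ℝ) := by
          have h0 : MeasureTheory.volume ({0, t₀} : Set ℝ) = 0 :=
            (Set.toFinite _).measure_zero _
          rw [MeasureTheory.ae_iff]
          apply MeasureTheory.measure_mono_null _ h0
          intro a ha
          simp only [Set.mem_setOf_eq, not_not] at ha
          exact ha
        filter_upwards [hae] with s hs
        simp only [Set.mem_insert_iff, Set.mem_singleton_iff, not_or] at hs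
        obtain ⟨hs0, hst₀⟩ := hs
        rcases lt_trichotomy s t₀ with h | h | h
        · rcases le_or_gt s 0 with h0 | h0
          · have hz : ∀ t : ℝ, Set.indicator (Set.Ioc 0 t)
                (fun s' => S (t - s') (g s')) s = 0 := fun t =>
              Set.indicator_of_notMem (fun hc => absurd hc.1 (not_lt.mpr h0)) _
            simp only [hz]
            exact tendsto_const_nhds
          · -- 0 < s < t₀
            have hev : ∀ᶠ t in nhdsWithin t₀ (Set.Ici 0), s < t :=
              (Filter.Tendsto.eventually_const_lt h tendsto_id).filter_mono nhdsWithin_le_nhds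
            have h1 : Filter.Tendsto (fun t => S (t - s) (g s))
                (nhdsWithin t₀ (Set.Ici 0)) (nhds (S (t₀ - s) (g s))) := by
              have hc : ContinuousWithinAt (fun r => S r (g s)) (Set.Ici 0) (t₀ - s) := by
                have := (hSjoint.comp ((continuousOn_id).prodMk continuousOn_const)
                  (fun r (hr : r ∈ Set.Ici (0:ℝ)) =>
                    (⟨hr, Set.mem_univ (g s)⟩ : (r, g s) ∈ Set.Ici 0 ×ˢ Set.univ)))
                exact this (t₀ - s) (by simp only [Set.mem_Ici]; linarith)
              apply hc.tendsto.comp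
              rw [tendsto_nhdsWithin_iff]
              constructor
              · exact (tendsto_id.sub tendsto_const_nhds).mono_left nhdsWithin_le_nhds
              · filter_upwards [hev] with t ht
                simp only [Set.mem_Ici]
                linarith
            rw [Set.indicator_of_mem (show s ∈ Set.Ioc 0 t₀ from ⟨h0, h.le⟩)]
            apply h1.congr'
            filter_upwards [hev] with t ht
            rw [Set.indicator_of_mem (show s ∈ Set.Ioc 0 t from ⟨h0, ht.le⟩)]
        · exact absurd h hst₀
        · -- t₀ < s
          have hev : ∀ᶠ t in nhdsWithin t₀ (Set.Ici 0), t < s :=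
            (Filter.Tendsto.eventually_lt_const h tendsto_id).filter_mono nhdsWithin_le_nhds
          rw [Set.indicator_of_notMem (fun hc : s ∈ Set.Ioc 0 t₀ => absurd hc.2 (not_le.mpr h))]
          apply Filter.Tendsto.congr' _ tendsto_const_nhds
          filter_upwards [hev] with t ht
          exact (Set.indicator_of_notMem (fun hc : s ∈ Set.Ioc 0 t =>
            absurd hc.2 (not_le.mpr ht)) _).symm
    -- put together
    have kk := key.congr' (by
      filter_upwards [self_mem_nhdsWithin] with t ht
      exact (hfeq t ht).symm)
    rw [← hfeq t₀ ht₀] at kk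
    exact kk
  · -- decay
    have hJ0 : ∀ t ≥ (0:ℝ), 0 ≤ ∫ s in (0:ℝ)..t, ω (t - s) * q s * p s := by
      intro t ht
      apply intervalIntegral.integral_nonneg ht
      intro s hs
      have h1 : (0:ℝ) ≤ t - s := by linarith [hs.2]
      exact mul_nonneg (mul_nonneg (hω0 _ h1) (hq0 s hs.1)) (hp0 s hs.1)
    have hJlim : Filter.Tendsto (fun t => ∫ s in (0:ℝ)..t, ω (t - s) * q s * p s)
        Filter.atTop (nhds 0) := by
      rw [Metric.tendsto_atTop]
      intro ε hε
      set ε' := ε / (2 * (M + 1)) with hε'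
      have hε'pos : 0 < ε' := div_pos hε (by linarith)
      obtain ⟨T₁, hT₁⟩ := (Metric.tendsto_atTop.mp hqlim) ε' hε'pos
      set T := max T₁ 0 with hT
      have hT0 : (0:ℝ) ≤ T := le_max_right _ _
      have hqT : ∀ s ≥ T, q s ≤ ε' := by
        intro s hs
        have h2 := hT₁ s (le_trans (le_max_left _ _) hs)
        rw [Real.dist_eq, sub_zero] at h2
        exact le_of_lt (lt_of_le_of_lt (le_abs_self _) h2)
      set P := ∫ s in (0:ℝ)..T, p s with hP
      have hP0 : 0 ≤ P := intervalIntegral.integral_nonneg hT0 (fun s hs => hp0 s hs.1)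
      have hXpos : (0:ℝ) < (C + 1) * (P + 1) := by positivity
      have hεb : 0 < ε / (2 * ((C + 1) * (P + 1))) := div_pos hε (by positivity)
      obtain ⟨T₂, hT₂⟩ := (Metric.tendsto_atTop.mp hωlim) _ hεb
      refine ⟨max (T + max T₂ 0) T, fun t ht => ?_⟩
      have htT : T ≤ t := le_trans (le_max_right _ _) ht
      have ht0 : (0:ℝ) ≤ t := le_trans hT0 htT
      have htT2 : T₂ ≤ t - T := by
        have h2 := le_trans (le_max_left _ _) ht
        have h3 : T₂ ≤ max T₂ 0 := le_max_left _ _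
        linarith
      have hωsmall : ω (t - T) < ε / (2 * ((C + 1) * (P + 1))) := by
        have h2 := hT₂ (t - T) htT2
        rw [Real.dist_eq, sub_zero] at h2
        exact lt_of_le_of_lt (le_abs_self _) h2
      have hsplit : (∫ s in (0:ℝ)..t, ω (t - s) * q s * p s) =
          (∫ s in (0:ℝ)..T, ω (t - s) * q s * p s) +
          ∫ s in T..t, ω (t - s) * q s * p s :=
        (intervalIntegral.integral_add_adjacent_intervals
          (hInt t 0 T q le_rfl hT0 htT (hqc.mono Set.Icc_subset_Ici_self))
          (hInt t T t q hT0 htT le_rfl (hqc.mono Set.Icc_subset_Ici_self))).symm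
      have hpiece1 : (∫ s in (0:ℝ)..T, ω (t - s) * q s * p s) ≤ ω (t - T) * C * P := by
        calc (∫ s in (0:ℝ)..T, ω (t - s) * q s * p s) ≤
            ∫ s in (0:ℝ)..T, ω (t - T) * C * p s := by
              apply intervalIntegral.integral_mono_on hT0
                (hInt t 0 T q le_rfl hT0 htT (hqc.mono Set.Icc_subset_Ici_self))
                ((hp' T hT0).const_mul (ω (t - T) * C))
              intro s hs
              have h1 : (0:ℝ) ≤ t - T := by linarith
              have h2 : ω (t - s) ≤ ω (t - T) := hωmono (t - T) (t - s) h1 (by linarith [hs.2])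
              apply mul_le_mul_of_nonneg_right _ (hp0 s hs.1)
              exact mul_le_mul h2 (hqC s hs.1) (hq0 s hs.1) (hω0 _ h1)
          _ = ω (t - T) * C * P := by rw [intervalIntegral.integral_const_mul]
      have hpiece1' : ω (t - T) * C * P < ε / 2 := by
        have h1 : 0 ≤ ω (t - T) := hω0 _ (by linarith)
        have h2 : ω (t - T) * C * P ≤ ω (t - T) * ((C + 1) * (P + 1)) := by
          nlinarith
        have h5 : ε / (2 * ((C + 1) * (P + 1))) * ((C + 1) * (P + 1)) = ε / 2 := by
          field_simp
        have h6 := mul_lt_mul_of_pos_right hωsmall hXpos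
        linarith
      have hpiece2 : (∫ s in T..t, ω (t - s) * q s * p s) ≤ ε' * M := by
        calc (∫ s in T..t, ω (t - s) * q s * p s) ≤ ∫ s in T..t, ω (t - s) * ε' * p s := by
              apply intervalIntegral.integral_mono_on htT
                (hInt t T t q hT0 htT le_rfl (hqc.mono Set.Icc_subset_Ici_self))
                (hInt t T t (fun _ => ε') hT0 htT le_rfl continuousOn_const)
              intro s hs
              have h1 : (0:ℝ) ≤ t - s := by linarith [hs.2]
              apply mul_le_mul_of_nonneg_right _ (hp0 s (le_trans hT0 hs.1))
              exact mul_le_mul_of_nonneg_left (hqT s hs.1) (hω0 _ h1)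
          _ = ε' * ∫ s in T..t, ω (t - s) * p s := hconst ε' t T t
          _ ≤ ε' * M := by
              apply mul_le_mul_of_nonneg_left _ hε'pos.le
              have hadd : (∫ s in (0:ℝ)..T, ω (t - s) * p s) +
                  (∫ s in T..t, ω (t - s) * p s) = ∫ s in (0:ℝ)..t, ω (t - s) * p s :=
                intervalIntegral.integral_add_adjacent_intervals
                  (hInt0 t 0 T le_rfl hT0 htT) (hInt0 t T t hT0 htT le_rfl)
              have hnn : 0 ≤ ∫ s in (0:ℝ)..T, ω (t - s) * p s := by
                apply intervalIntegral.integral_nonneg hT0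
                intro s hs
                exact mul_nonneg (hω0 _ (by linarith [hs.2])) (hp0 s hs.1)
              linarith [hMb t ht0]
      have hε'M : ε' * M < ε / 2 := by
        have hd : ε' * (2 * (M + 1)) = ε := div_mul_cancel₀ _ (by linarith)
        nlinarith
      rw [Real.dist_eq, sub_zero, abs_of_nonneg (hJ0 t ht0)]
      linarith
    apply squeeze_zero' (Filter.Eventually.of_forall (fun t => norm_nonneg _))
      _ hJlim
    filter_upwards [eventually_ge_atTop (0:ℝ)] with t ht
    exact hIbound t ht

/-- Lemma 4.4: for small data, the solution operator `Φ` maps the ball `B_η` of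
the space `BC₀(ℝ⁺; H)` (bounded continuous functions decaying at infinity, with
prescribed value `ξ(0)` at `0`) into itself. -/
theorem solution_operator_invariant_ball
    {H : Type*} [NormedAddCommGroup H] [InnerProductSpace ℝ H] [CompleteSpace H]
    (S : ℝ → H →L[ℝ] H) (ω : ℝ → ℝ) (τ M : ℝ) (ρ : ℝ → ℝ)
    (f : ℝ → H → H) (p G : ℝ → ℝ)
    (hτ : 0 ≤ τ)
    (hS0 : S 0 = ContinuousLinearMap.id ℝ H)
    (hScont : ∀ v : H, ContinuousOn (fun t => S t v) (Set.Ici 0))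
    (hωc : ContinuousOn ω (Set.Ici 0))
    (hωpos : ∀ t ≥ (0:ℝ), 0 < ω t) (hωle : ∀ t ≥ (0:ℝ), ω t ≤ 1)
    (hωmono : ∀ s t : ℝ, 0 ≤ s → s ≤ t → ω t ≤ ω s)
    (hωlim : Filter.Tendsto ω Filter.atTop (nhds 0))
    (hSω : ∀ t ≥ (0:ℝ), ∀ v : H, ‖S t v‖ ≤ ω t * ‖v‖)
    (hρc : ContinuousOn ρ (Set.Ici 0))
    (hρ1 : ∀ t ≥ (0:ℝ), -τ ≤ t - ρ t) (hρ2 : ∀ t ≥ (0:ℝ), t - ρ t ≤ t)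
    (hρlim : Filter.Tendsto (fun t => t - ρ t) Filter.atTop Filter.atTop)
    (hfc : ContinuousOn (Function.uncurry f) (Set.Ici (0:ℝ) ×ˢ (Set.univ : Set H)))
    (hfG : ∀ t ≥ (0:ℝ), ∀ v : H, ‖f t v‖ ≤ p t * G ‖v‖)
    (hp : ∀ T > (0:ℝ), IntervalIntegrable p MeasureTheory.volume 0 T)
    (hp0 : ∀ t ≥ (0:ℝ), 0 ≤ p t)
    (hGc : ContinuousOn G (Set.Ici 0))
    (hG0 : ∀ r ≥ (0:ℝ), 0 ≤ G r)
    (hGmono : ∀ r s : ℝ, 0 ≤ r → r ≤ s → G r ≤ G s)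
    (hM : IsLUB {x : ℝ | ∃ t ≥ (0:ℝ), x = ∫ s in (0:ℝ)..t, ω (t - s) * p s} M)
    (hGbdd : Filter.IsBoundedUnder (· ≤ ·) (nhdsWithin 0 (Set.Ioi 0)) (fun r => G r / r))
    (hsmall : Filter.limsup (fun r => G r / r) (nhdsWithin 0 (Set.Ioi 0)) * M < 1) :
    ∃ δ > (0:ℝ), ∃ η > (0:ℝ), ∀ ξ : ℝ → H, ContinuousOn ξ (Set.Icc (-τ) 0) →
      (∀ s ∈ Set.Icc (-τ) (0:ℝ), ‖ξ s‖ ≤ δ) →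
      ∀ u : ℝ → H, ContinuousOn u (Set.Ici 0) → u 0 = ξ 0 →
        (∀ t ≥ (0:ℝ), ‖u t‖ ≤ η) →
        Filter.Tendsto (fun t => ‖u t‖) Filter.atTop (nhds 0) →
        (ContinuousOn (fun t => S t (ξ 0) +
            ∫ s in (0:ℝ)..t, S (t - s) (f s (extendByHistory ξ u (s - ρ s)))) (Set.Ici 0)) ∧
        (S 0 (ξ 0) + (∫ s in (0:ℝ)..(0:ℝ),
            S (0 - s) (f s (extendByHistory ξ u (s - ρ s)))) = ξ 0) ∧
        (∀ t ≥ (0:ℝ), ‖S t (ξ 0) +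
            ∫ s in (0:ℝ)..t, S (t - s) (f s (extendByHistory ξ u (s - ρ s)))‖ ≤ η) ∧
        Filter.Tendsto (fun t => ‖S t (ξ 0) +
            ∫ s in (0:ℝ)..t, S (t - s) (f s (extendByHistory ξ u (s - ρ s)))‖)
          Filter.atTop (nhds 0) := by
  have hω0 : ∀ t ≥ (0:ℝ), 0 ≤ ω t := fun t ht => (hωpos t ht).le
  have hM0 : 0 ≤ M := hM.1 ⟨0, le_rfl, by simp⟩
  have hMb : ∀ t ≥ (0:ℝ), (∫ s in (0:ℝ)..t, ω (t - s) * p s) ≤ M := fun t ht =>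
    hM.1 ⟨t, ht, rfl⟩
  have hp' : ∀ T ≥ (0:ℝ), IntervalIntegrable p MeasureTheory.volume 0 T := by
    intro T hT
    apply (hp (T + 1) (by linarith)).mono_set
    rw [Set.uIcc_of_le hT, Set.uIcc_of_le (by linarith : (0:ℝ) ≤ T + 1)]
    exact Set.Icc_subset_Icc le_rfl (by linarith)
  have hSjoint : ContinuousOn (fun z : ℝ × H => S z.1 z.2)
      (Set.Ici 0 ×ˢ (Set.univ : Set H)) := by
    apply my_S_joint_continuous S hScont
    intro t ht v
    calc ‖S t v‖ ≤ ω t * ‖v‖ := hSω t ht v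
      _ ≤ 1 * ‖v‖ := mul_le_mul_of_nonneg_right (hωle t ht) (norm_nonneg v)
      _ = ‖v‖ := one_mul _
  -- choice of constants
  set L := Filter.limsup (fun r => G r / r) (nhdsWithin 0 (Set.Ioi 0)) with hL
  set L' := max L 0 with hL'
  have hL'0 : 0 ≤ L' := le_max_right _ _
  have hLL' : L ≤ L' := le_max_left _ _
  have hL'M : L' * M < 1 := by
    rcases le_or_gt 0 L with h | h
    · rwa [hL', max_eq_left h]
    · rw [hL', max_eq_right h.le, zero_mul]
      exact one_pos
  set c := L' + (1 - L' * M) / (2 * (M + 1)) with hc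
  have hdpos : 0 < (1 - L' * M) / (2 * (M + 1)) := div_pos (by linarith) (by linarith)
  have hcL' : L' < c := by rw [hc]; linarith
  have hc0 : 0 < c := lt_of_le_of_lt hL'0 hcL'
  have hcM : c * M < 1 := by
    have h2 : (1 - L' * M) / (2 * (M + 1)) * (2 * (M + 1)) = 1 - L' * M :=
      div_mul_cancel₀ _ (by linarith)
    rw [hc]
    have h3 : 2 * ((1 - L' * M) / (2 * (M + 1)) * M) + 2 * ((1 - L' * M) / (2 * (M + 1)))
        = 1 - L' * M := by linear_combination h2
    have h4 : (L' + (1 - L' * M) / (2 * (M + 1))) * M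
        = L' * M + (1 - L' * M) / (2 * (M + 1)) * M := by ring
    linarith
  have hev : ∀ᶠ r in nhdsWithin 0 (Set.Ioi 0), G r / r < c :=
    Filter.eventually_lt_of_limsup_lt (lt_of_le_of_lt hLL' hcL') hGbdd
  rw [eventually_nhdsWithin_iff, Metric.eventually_nhds_iff] at hev
  obtain ⟨η₀, hη₀, hevb⟩ := hev
  have hGlin : ∀ r : ℝ, 0 < r → r < η₀ → G r ≤ c * r := by
    intro r h1 h2
    have h3 := hevb (by rw [Real.dist_eq, sub_zero, abs_of_pos h1]; exact h2) h1
    exact le_of_lt ((div_lt_iff₀ h1).mp h3)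
  have hG00 : G 0 = 0 := by
    by_contra h
    have h0 : 0 < G 0 := lt_of_le_of_ne (hG0 0 le_rfl) (Ne.symm h)
    set r := min (η₀ / 2) (G 0 / (2 * c)) with hr
    have hr0 : 0 < r := lt_min (by linarith) (div_pos h0 (by linarith))
    have h1 : G 0 ≤ G r := hGmono 0 r le_rfl hr0.le
    have h2 : G r ≤ c * r := hGlin r hr0 (lt_of_le_of_lt (min_le_left _ _) (by linarith))
    have h3 : c * r ≤ c * (G 0 / (2 * c)) := mul_le_mul_of_nonneg_left (min_le_right _ _) hc0.le
    have h4 : c * (G 0 / (2 * c)) = G 0 / 2 := by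
      field_simp
    have h5 : G 0 ≤ G 0 / 2 := le_trans h1 (le_trans h2 (le_trans h3 (le_of_eq h4)))
    linarith
  set η := η₀ / 2 with hη
  have hηpos : 0 < η := by rw [hη]; linarith
  have hηlt : η < η₀ := by rw [hη]; linarith
  have hGη : G η ≤ c * η := hGlin η hηpos hηlt
  set δ := η * (1 - c * M) with hδ
  have hδpos : 0 < δ := mul_pos hηpos (by linarith)
  have hδη : δ ≤ η := by
    have h6 : 0 ≤ η * (c * M) := mul_nonneg hηpos.le (mul_nonneg hc0.le hM0)
    rw [hδ]
    nlinarith [h6]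
  refine ⟨δ, hδpos, η, hηpos, ?_⟩
  intro ξ hξc hξδ u huc hu0 huη hulim
  have hξ0δ : ‖ξ 0‖ ≤ δ := hξδ 0 ⟨by linarith, le_rfl⟩
  -- the extended history function
  have hEu : Set.EqOn (extendByHistory ξ u) u (Set.Ici 0) := fun t ht => if_pos ht
  have hEξ : Set.EqOn (extendByHistory ξ u) ξ (Set.Icc (-τ) 0) := by
    intro t ht
    by_cases h : 0 ≤ t
    · have h1 : t = 0 := le_antisymm ht.2 h
      subst h1
      show (if _ then u 0 else ξ 0) = ξ 0
      rw [if_pos le_rfl, hu0]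
    · exact if_neg h
  have hEc : ContinuousOn (extendByHistory ξ u) (Set.Ici (-τ)) := by
    have h3 := my_continuousOn_union_closed isClosed_Icc isClosed_Ici
      (hξc.congr hEξ) (huc.congr hEu)
    rwa [Set.Icc_union_Ici_eq_Ici (by linarith : (-τ:ℝ) ≤ 0)] at h3
  have hwc : ContinuousOn (fun s => extendByHistory ξ u (s - ρ s)) (Set.Ici 0) :=
    hEc.comp (continuousOn_id.sub hρc) (fun s hs => hρ1 s hs)
  have hwb : ∀ s ≥ (0:ℝ), ‖extendByHistory ξ u (s - ρ s)‖ ≤ η := by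
    intro s hs
    by_cases h : 0 ≤ s - ρ s
    · rw [hEu (show s - ρ s ∈ Set.Ici (0:ℝ) from h)]
      exact huη _ h
    · have hmem : s - ρ s ∈ Set.Icc (-τ) (0:ℝ) := ⟨hρ1 s hs, (not_le.mp h).le⟩
      rw [hEξ hmem]
      exact le_trans (hξδ _ hmem) hδη
  have hgc : ContinuousOn (fun s => f s (extendByHistory ξ u (s - ρ s))) (Set.Ici 0) :=
    hfc.comp (continuousOn_id.prodMk hwc) (fun s hs => ⟨hs, Set.mem_univ _⟩)
  have hqc : ContinuousOn (fun s => G ‖extendByHistory ξ u (s - ρ s)‖) (Set.Ici 0) :=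
    hGc.comp hwc.norm (fun s _ => norm_nonneg _)
  have hqlim : Filter.Tendsto (fun s => G ‖extendByHistory ξ u (s - ρ s)‖)
      Filter.atTop (nhds 0) := by
    have h1 : Filter.Tendsto (fun s => ‖extendByHistory ξ u (s - ρ s)‖)
        Filter.atTop (nhds 0) := by
      have h2 : Filter.Tendsto (fun s => ‖u (s - ρ s)‖) Filter.atTop (nhds 0) :=
        hulim.comp hρlim
      apply h2.congr'
      filter_upwards [hρlim.eventually_ge_atTop 0] with s hs
      rw [hEu (show s - ρ s ∈ Set.Ici (0:ℝ) from hs)]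
    have h3 : Filter.Tendsto (fun s => ‖extendByHistory ξ u (s - ρ s)‖)
        Filter.atTop (nhdsWithin 0 (Set.Ici 0)) :=
      tendsto_nhdsWithin_iff.mpr ⟨h1, Filter.Eventually.of_forall (fun s => norm_nonneg _)⟩
    have h4 := (hGc 0 (Set.mem_Ici.mpr le_rfl)).tendsto.comp h3
    rwa [hG00] at h4
  have main := my_aux_main S ω p (fun s => G ‖extendByHistory ξ u (s - ρ s)‖) (G η) M
    (fun s => f s (extendByHistory ξ u (s - ρ s))) hSjoint hSω hωc hω0 hωle hωmono hωlim
    hgc hp' hp0 hqc (fun s _ => hG0 _ (norm_nonneg _))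
    (fun s hs => hGmono _ _ (norm_nonneg _) (hwb s hs)) (hG0 η hηpos.le) hqlim
    (fun s hs => hfG s hs _) hMb
  obtain ⟨hcontI, hbndI, hlimI⟩ := main
  refine ⟨(hScont (ξ 0)).add hcontI, ?_, ?_, ?_⟩
  · rw [intervalIntegral.integral_same, add_zero, hS0]
    rfl
  · intro t ht
    have h1 : ‖S t (ξ 0)‖ ≤ ω t * δ :=
      le_trans (hSω t ht _) (mul_le_mul_of_nonneg_left hξ0δ (hω0 t ht))
    have h2 : ω t * δ ≤ δ := by
      calc ω t * δ ≤ 1 * δ := mul_le_mul_of_nonneg_right (hωle t ht) hδpos.le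
        _ = δ := one_mul _
    have h3 : G η * M ≤ c * η * M := mul_le_mul_of_nonneg_right hGη hM0
    calc ‖S t (ξ 0) + ∫ s in (0:ℝ)..t, S (t - s) (f s (extendByHistory ξ u (s - ρ s)))‖ ≤
        ‖S t (ξ 0)‖ + ‖∫ s in (0:ℝ)..t, S (t - s) (f s (extendByHistory ξ u (s - ρ s)))‖ :=
          norm_add_le _ _
      _ ≤ δ + G η * M := add_le_add (le_trans h1 h2) (hbndI t ht)
      _ ≤ δ + c * η * M := by linarith
      _ = η := by rw [hδ]; ring
  · have hglim : Filter.Tendsto (fun t => ω t * δ +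
        ‖∫ s in (0:ℝ)..t, S (t - s) (f s (extendByHistory ξ u (s - ρ s)))‖)
        Filter.atTop (nhds 0) := by
      have := (hωlim.mul_const δ).add hlimI
      simpa using this
    apply squeeze_zero' (Filter.Eventually.of_forall (fun t => norm_nonneg _)) _ hglim
    filter_upwards [eventually_ge_atTop (0:ℝ)] with t ht
    calc ‖S t (ξ 0) + ∫ s in (0:ℝ)..t, S (t - s) (f s (extendByHistory ξ u (s - ρ s)))‖ ≤
        ‖S t (ξ 0)‖ + ‖∫ s in (0:ℝ)..t, S (t - s) (f s (extendByHistory ξ u (s - ρ s)))‖ :=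
          norm_add_le _ _
      _ ≤ ω t * δ + ‖∫ s in (0:ℝ)..t, S (t - s) (f s (extendByHistory ξ u (s - ρ s)))‖ := by
          have h1 : ‖S t (ξ 0)‖ ≤ ω t * δ :=
            le_trans (hSω t ht _) (mul_le_mul_of_nonneg_left hξ0δ (hω0 t ht))
          linarith
end

section
/- Let ω : [0,∞) → (0,∞) be nonincreasing with ω(t) → 0 as t → ∞, let p be nonnegative and locally integrable on [0,∞) with M := sup_{t≥0} ∫₀^t ω(t−s) p(s) ds < ∞, and let h : [0,∞) → [0,∞) be bounded and measurable with h(t) → 0 as t → ∞. Then ∫₀^t ω(t−s) p(s) h(s) ds → 0 as t → ∞. -/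
open MeasureTheory Filter Set

/-- Decay of the convolution `∫₀ᵗ ω(t-s) p(s) h(s) ds` when the kernel `ω` is
nonincreasing and vanishes at infinity, the convolution `ω ∗ p` is uniformly
bounded, and `h` is bounded and vanishes at infinity. -/
theorem conv_decay
    (ω p h : ℝ → ℝ) (M : ℝ)
    (hω0 : ∀ t ≥ (0:ℝ), 0 < ω t)
    (hωmono : ∀ s t : ℝ, 0 ≤ s → s ≤ t → ω t ≤ ω s)
    (hωlim : Filter.Tendsto ω Filter.atTop (nhds 0))
    (hp0 : ∀ t ≥ (0:ℝ), 0 ≤ p t)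
    (hpint : ∀ T > (0:ℝ), IntervalIntegrable p MeasureTheory.volume 0 T)
    (hM : ∀ t ≥ (0:ℝ), ∫ s in (0:ℝ)..t, ω (t - s) * p s ≤ M)
    (hhmeas : Measurable h)
    (hh0 : ∀ t ≥ (0:ℝ), 0 ≤ h t)
    (hhbdd : ∃ C : ℝ, ∀ t ≥ (0:ℝ), h t ≤ C)
    (hhlim : Filter.Tendsto h Filter.atTop (nhds 0)) :
    Filter.Tendsto (fun t => ∫ s in (0:ℝ)..t, ω (t - s) * p s * h s)
      Filter.atTop (nhds 0) := by
  obtain ⟨C, hC⟩ := hhbdd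
  have hC0 : 0 ≤ C := le_trans (hh0 0 le_rfl) (hC 0 le_rfl)
  set g : ℝ → ℝ := fun x => ω (max x 0) with hgdef
  set h' : ℝ → ℝ := fun s => min (max (h s) 0) C with hh'def
  have hganti : Antitone g := fun x y hxy =>
    hωmono (max x 0) (max y 0) (le_max_right x 0) (max_le_max hxy le_rfl)
  have hgmeas : Measurable g := hganti.measurable
  have hgpos : ∀ x, 0 < g x := fun x => hω0 _ (le_max_right x 0)
  have hgle : ∀ x, g x ≤ ω 0 := fun x => hωmono 0 (max x 0) le_rfl (le_max_right x 0)
  have hh'meas : Measurable h' := (hhmeas.max measurable_const).min measurable_const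
  have hh'0 : ∀ s, 0 ≤ h' s := fun s => le_min (le_max_right _ _) hC0
  have hh'C : ∀ s, h' s ≤ C := fun s => min_le_right _ _
  have hM0 : 0 ≤ M := by
    have := hM 0 le_rfl
    simpa using this
  -- key integrability lemma
  have key : ∀ (k : ℝ → ℝ), Measurable k → (∃ B : ℝ, ∀ x, ‖k x‖ ≤ B) →
      ∀ t > (0:ℝ), ∀ a b : ℝ, uIcc a b ⊆ uIcc (0:ℝ) t →
      IntervalIntegrable (fun s => k s * p s) volume a b := by
    intro k hk hkB t ht a b hab
    have hp' : IntervalIntegrable p volume a b := (hpint t ht).mono_set hab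
    rw [intervalIntegrable_iff] at hp' ⊢
    exact hp'.bdd_mul hk.aestronglyMeasurable.restrict (Filter.Eventually.of_forall hkB.choose_spec)
  have hint1 : ∀ t > (0:ℝ), ∀ a b : ℝ, uIcc a b ⊆ uIcc (0:ℝ) t →
      IntervalIntegrable (fun s => g (t - s) * p s * h' s) volume a b := by
    intro t ht a b hab
    have H := key (fun s => g (t - s) * h' s)
      ((hgmeas.comp (measurable_const.sub measurable_id)).mul hh'meas)
      ⟨ω 0 * C, by
        intro x
        have h1 : |g (t - x)| = g (t - x) := abs_of_pos (hgpos _)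
        have h2 : |h' x| = h' x := abs_of_nonneg (hh'0 x)
        simp only [norm_mul, Real.norm_eq_abs, h1, h2]
        exact mul_le_mul (hgle _) (hh'C _) (hh'0 _) (hω0 0 le_rfl).le⟩
      t ht a b hab
    have : (fun s => g (t - s) * h' s * p s) = fun s => g (t - s) * p s * h' s := by
      funext s; ring
    rwa [this] at H
  have hint2 : ∀ t > (0:ℝ), ∀ a b : ℝ, uIcc a b ⊆ uIcc (0:ℝ) t →
      IntervalIntegrable (fun s => g (t - s) * p s) volume a b := by
    intro t ht a b hab
    exact key (fun s => g (t - s))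
      (hgmeas.comp (measurable_const.sub measurable_id))
      ⟨ω 0, fun x => by
        rw [Real.norm_eq_abs, abs_of_pos (hgpos _)]; exact hgle _⟩
      t ht a b hab
  -- congruence on [0,t]
  have hcongr1 : ∀ t ≥ (0:ℝ), (∫ s in (0:ℝ)..t, ω (t - s) * p s * h s)
      = ∫ s in (0:ℝ)..t, g (t - s) * p s * h' s := by
    intro t ht
    apply intervalIntegral.integral_congr
    intro s hs
    rw [uIcc_of_le ht] at hs
    have h1 : g (t - s) = ω (t - s) := by
      simp only [hgdef]; rw [max_eq_left (sub_nonneg.2 hs.2)]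
    have h2 : h' s = h s := by
      simp only [hh'def]; rw [max_eq_left (hh0 s hs.1), min_eq_left (hC s hs.1)]
    simp only [h1, h2]
  have hcongr2 : ∀ t ≥ (0:ℝ), (∫ s in (0:ℝ)..t, ω (t - s) * p s)
      = ∫ s in (0:ℝ)..t, g (t - s) * p s := by
    intro t ht
    apply intervalIntegral.integral_congr
    intro s hs
    rw [uIcc_of_le ht] at hs
    have h1 : g (t - s) = ω (t - s) := by
      simp only [hgdef]; rw [max_eq_left (sub_nonneg.2 hs.2)]
    simp only [h1]
  rw [NormedAddCommGroup.tendsto_nhds_zero]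
  intro ε hε
  have hMden : (0:ℝ) < M + 1 := by linarith
  set ε' : ℝ := ε / (2 * (M + 1)) with hε'def
  have hε'pos : 0 < ε' := by positivity
  obtain ⟨T₀, hT₀⟩ := (Metric.tendsto_atTop.mp hhlim) ε' hε'pos
  set T : ℝ := max T₀ 1 with hTdef
  have hT1 : (1:ℝ) ≤ T := le_max_right _ _
  have hTpos : (0:ℝ) < T := lt_of_lt_of_le one_pos hT1
  have hhT : ∀ s ≥ T, h s < ε' := by
    intro s hs
    have := hT₀ s (le_trans (le_max_left _ _) hs)
    rw [Real.dist_eq, sub_zero] at this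
    exact lt_of_le_of_lt (le_abs_self _) this
  set P : ℝ := ∫ s in (0:ℝ)..T, p s with hPdef
  have hP0 : 0 ≤ P :=
    intervalIntegral.integral_nonneg hTpos.le (fun s hs => hp0 s hs.1)
  have hden : (0:ℝ) < C * P + 1 := by positivity
  set δ : ℝ := ε / (2 * (C * P + 1)) with hδdef
  have hδpos : 0 < δ := by positivity
  obtain ⟨T₂, hT₂⟩ := (Metric.tendsto_atTop.mp hωlim) δ hδpos
  filter_upwards [eventually_ge_atTop (T + max T₂ 0)] with t ht
  have htT : T ≤ t := le_trans (le_add_of_nonneg_right (le_max_right T₂ 0)) ht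
  have ht0 : (0:ℝ) < t := lt_of_lt_of_le hTpos htT
  have hωδ : ω (t - T) < δ := by
    have h1 : T₂ ≤ t - T := by
      have := le_max_left T₂ 0; linarith
    have := hT₂ (t - T) h1
    rw [Real.dist_eq, sub_zero] at this
    exact lt_of_le_of_lt (le_abs_self _) this
  have hωtT0 : 0 ≤ ω (t - T) := (hω0 _ (by linarith)).le
  -- subset facts
  have hsub1 : uIcc (0:ℝ) T ⊆ uIcc (0:ℝ) t := by
    rw [uIcc_of_le hTpos.le, uIcc_of_le ht0.le]
    exact Icc_subset_Icc le_rfl htT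
  have hsub2 : uIcc T t ⊆ uIcc (0:ℝ) t := by
    rw [uIcc_of_le htT, uIcc_of_le ht0.le]
    exact Icc_subset_Icc hTpos.le le_rfl
  have hsub3 : uIcc (0:ℝ) t ⊆ uIcc (0:ℝ) t := subset_rfl
  have hi1 := hint1 t ht0 0 T hsub1
  have hi2 := hint1 t ht0 T t hsub2
  have hg1 := hint2 t ht0 0 T hsub1
  have hg2 := hint2 t ht0 T t hsub2
  -- rewrite & split
  rw [hcongr1 t ht0.le]
  set A : ℝ := ∫ s in (0:ℝ)..T, g (t - s) * p s * h' s with hAdef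
  set B : ℝ := ∫ s in T..t, g (t - s) * p s * h' s with hBdef
  have hsplit : (∫ s in (0:ℝ)..t, g (t - s) * p s * h' s) = A + B :=
    (intervalIntegral.integral_add_adjacent_intervals hi1 hi2).symm
  have hA0 : 0 ≤ A := intervalIntegral.integral_nonneg hTpos.le (fun s hs =>
    mul_nonneg (mul_nonneg (hgpos _).le (hp0 s hs.1)) (hh'0 s))
  have hB0 : 0 ≤ B := intervalIntegral.integral_nonneg htT (fun s hs =>
    mul_nonneg (mul_nonneg (hgpos _).le (hp0 s (le_trans hTpos.le hs.1))) (hh'0 s))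
  -- bound A
  have hAbd : A ≤ ω (t - T) * C * P := by
    have hmono : A ≤ ∫ s in (0:ℝ)..T, (ω (t - T) * C) * p s := by
      apply intervalIntegral.integral_mono_on hTpos.le hi1
        ((hpint T hTpos).const_mul _)
      intro s hs
      have hgb : g (t - s) ≤ ω (t - T) := by
        have h1 : g (t - T) = ω (t - T) := by
          simp only [hgdef]; rw [max_eq_left (by linarith : (0:ℝ) ≤ t - T)]
        rw [← h1]
        exact hganti (by linarith [hs.2] : t - T ≤ t - s)
      have hps : 0 ≤ p s := hp0 s hs.1
      nlinarith [mul_nonneg (mul_nonneg (sub_nonneg.2 hgb) (hh'0 s)) hps,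
        mul_nonneg (mul_nonneg (sub_nonneg.2 (hh'C s)) hωtT0) hps]
    calc A ≤ ∫ s in (0:ℝ)..T, (ω (t - T) * C) * p s := hmono
      _ = ω (t - T) * C * P := by
          rw [intervalIntegral.integral_const_mul]
  -- bound B
  have hBbd : B ≤ ε' * M := by
    have hmono : B ≤ ∫ s in T..t, ε' * (g (t - s) * p s) := by
      apply intervalIntegral.integral_mono_on htT hi2 (hg2.const_mul _)
      intro s hs
      have hs0 : (0:ℝ) ≤ s := le_trans hTpos.le hs.1
      have hh's : h' s ≤ ε' := le_trans (min_le_left _ _)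
        (by rw [max_eq_left (hh0 s hs0)]; exact (hhT s hs.1).le)
      have hgp : 0 ≤ g (t - s) * p s := mul_nonneg (hgpos _).le (hp0 s hs0)
      calc g (t - s) * p s * h' s ≤ g (t - s) * p s * ε' :=
            mul_le_mul_of_nonneg_left hh's hgp
        _ = ε' * (g (t - s) * p s) := by ring
    have hrest : (∫ s in T..t, g (t - s) * p s) ≤ M := by
      have hsplit2 : (∫ s in (0:ℝ)..t, g (t - s) * p s)
          = (∫ s in (0:ℝ)..T, g (t - s) * p s) + ∫ s in T..t, g (t - s) * p s :=
        (intervalIntegral.integral_add_adjacent_intervals hg1 hg2).symm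
      have h1 : 0 ≤ ∫ s in (0:ℝ)..T, g (t - s) * p s :=
        intervalIntegral.integral_nonneg hTpos.le (fun s hs =>
          mul_nonneg (hgpos _).le (hp0 s hs.1))
      have h2 : (∫ s in (0:ℝ)..t, g (t - s) * p s) ≤ M := by
        rw [← hcongr2 t ht0.le]; exact hM t ht0.le
      linarith
    calc B ≤ ∫ s in T..t, ε' * (g (t - s) * p s) := hmono
      _ = ε' * ∫ s in T..t, g (t - s) * p s := by
          rw [intervalIntegral.integral_const_mul]
      _ ≤ ε' * M := mul_le_mul_of_nonneg_left hrest hε'pos.le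
  -- conclude
  have hAε : A < ε / 2 := by
    have h1 : ω (t - T) * C * P ≤ δ * (C * P) := by
      have := mul_le_mul_of_nonneg_right hωδ.le (mul_nonneg hC0 hP0)
      nlinarith
    have h2 : δ * (C * P + 1) = ε / 2 := by
      rw [hδdef]; field_simp
    nlinarith
  have hBε : B ≤ ε / 2 := by
    have h1 : ε' * M ≤ ε' * (M + 1) := by nlinarith
    have h2 : ε' * (M + 1) = ε / 2 := by
      rw [hε'def]; field_simp
    linarith
  rw [hsplit, Real.norm_eq_abs, abs_of_nonneg (by linarith)]
  linarith
end
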